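/- arXiv:1501.01574 — 2 statements merged into one kernel-verified Lean document; each statement's English description precedes it below -/
import Mathlib

section
/- Let p, q be coprime integers with q ≥ 2, and let J : ℤ → ℤ[t,t⁻¹] satisfy J(−m) = −J(m) for all m and J(m) ≠ 0 for all m ≥ 1. Suppose there are rational numbers a₀, a₁, b₀, b₁, d₀, d₁ with b₀ ≤ 0 and b₁ ≤ 0, and an integer N, such that for all n ≥ N one has deg₊ J(n) = 4(a_ε n² + b_ε n + d_ε), where ε is the parity of n, and assume p/q ∉ {4a₀, 4a₁}. Then every limit point of the sequence ( deg₊ JC(n) / (4n²) )_{n ≥ 1} lies in {q²a₀, q²a₁, pq/4}; that is, the set of such limit points is contained in q²·L ∪ {pq/4}, where L = {a₀, a₁} is the set of limit points of ( deg₊ J(n) / (4n²) )_{n ≥ 1}. (The Jones-slope containment js_{K_{p,q}} ⊆ q²·js_K ∪ {pq/4} of Theorem 1.3, expressed at the level of degree sequences.) -/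
/-! Write `JC(n) = t^{pq(n²-1)} · S(n)`. Passing from `S(n)` to `S(n+2)` adds the two terms
`j = ±(n+1)`; their degrees are quadratics in `n` with the same leading coefficient
`A = 4aq² - pq`, where `a` is the coefficient attached to the parity of `q(n+1)+1`, and, since
`p/q ≠ 4a`, with different linear coefficients. So eventually one term dominates and the increment
has degree `A n² + O(n)`. If `A > 0` the increments eventually dominate the partial sum, so
`deg S(n) = A n² + O(n)` and the slope along the parity class is `(pq + A)/4 = q²a`. If `A < 0`,
either the degree of `S(n)` freezes (slope `pq/4`) or it stays equal to the degree of the next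
increment (slope `q²a` again). Hence the even and the odd subsequences each converge to a point
of `{q²a₀, q²a₁, pq/4}`. -/

open LaurentPolynomial

/-- `degP f` is the largest exponent of `t` occurring in the Laurent polynomial `f`
(declared to be `0` for `f = 0`). -/
noncomputable def degP (f : LaurentPolynomial ℤ) : ℤ := WithBot.unbotD 0 f.coeff.support.max

/-- The `(p,q)`-cabling sum `JC(n) = Σ_j t^{pq(n²−1) − p·j·(qj+2)} · J(qj+1)`,
the sum over integers `j` with `|j| ≤ n−1` and `j ≡ n−1 (mod 2)`. -/
noncomputable def cablingSum (J : ℤ → LaurentPolynomial ℤ) (p q : ℤ) (n : ℕ) :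
    LaurentPolynomial ℤ :=
  ∑ j ∈ (Finset.Icc (1 - (n : ℤ)) ((n : ℤ) - 1)).filter
      (fun j => j % 2 = ((n : ℤ) - 1) % 2),
    T (p * q * ((n : ℤ) ^ 2 - 1) - p * j * (q * j + 2)) * J (q * j + 1)

open Filter Topology

namespace LaurentPolynomial

section Degree

variable {R : Type*} [Ring R]

theorem degree_mul_le (f g : R[T;T⁻¹]) : (f * g).degree ≤ f.degree + g.degree :=
  AddMonoidAlgebra.supDegree_mul_le (fun _ _ => WithBot.coe_add _ _)

theorem degree_T_mul (n : ℤ) (f : R[T;T⁻¹]) : (T n * f).degree = n + f.degree := by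
  have upper : ∀ (m : ℤ) (g : R[T;T⁻¹]), (T m * g).degree ≤ m + g.degree := fun m g =>
    (degree_mul_le _ _).trans (by gcongr; exact degree_T_le m)
  refine le_antisymm (upper n f) ?_
  have h := upper (-n) (T n * f)
  rw [← mul_assoc, ← T_add, neg_add_cancel, T_zero, one_mul] at h
  have := add_le_add_right h (n : WithBot ℤ)
  rwa [← add_assoc, ← WithBot.coe_add, add_neg_cancel, WithBot.coe_zero, zero_add] at this

theorem degree_neg (f : R[T;T⁻¹]) : (-f).degree = f.degree :=
  AddMonoidAlgebra.supDegree_neg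

theorem degree_add_le (f g : R[T;T⁻¹]) : (f + g).degree ≤ max f.degree g.degree :=
  AddMonoidAlgebra.supDegree_add_le

theorem degree_add_eq_left_of_lt {f g : R[T;T⁻¹]} (h : g.degree < f.degree) :
    (f + g).degree = f.degree :=
  AddMonoidAlgebra.supDegree_add_eq_left h

theorem degree_add_eq_right_of_lt {f g : R[T;T⁻¹]} (h : f.degree < g.degree) :
    (f + g).degree = g.degree :=
  AddMonoidAlgebra.supDegree_add_eq_right h

theorem degree_add_eq_max_of_ne {f g : R[T;T⁻¹]} (h : f.degree ≠ g.degree) :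
    (f + g).degree = max f.degree g.degree := by
  rcases h.lt_or_gt with h | h
  · rw [degree_add_eq_right_of_lt h, max_eq_right h.le]
  · rw [degree_add_eq_left_of_lt h, max_eq_left h.le]

end Degree

section PartialSums

variable {R : Type*} [Ring R] {u δ : ℕ → R[T;T⁻¹]} {m : ℕ → ℤ}

theorem eventually_degree_succ_eq_of_increasing (hu : ∀ k, u (k + 1) = u k + δ k)
    (hδ : ∀ᶠ k in atTop, (δ k).degree = m k) (hm : ∀ᶠ k in atTop, m k < m (k + 1)) :
    ∀ᶠ k in atTop, (u (k + 1)).degree = m k := by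
  obtain ⟨K, hK⟩ := (hδ.and hm).exists_forall_of_atTop
  -- The degrees `m k` are unbounded while, as long as `u k` has degree at least `m k`,
  -- the degree of `u k` cannot grow; so at some point `u k` falls below `m k`.
  obtain ⟨k₀, hk₀K, hk₀⟩ : ∃ k₀ ≥ K, (u k₀).degree < m k₀ := by
    by_contra! hge
    have hbound : ∀ k ≥ K, (u k).degree ≤ (u K).degree := by
      refine Nat.le_induction le_rfl fun k hk ih => ?_
      rw [hu]
      exact (degree_add_le _ _).trans (max_le ih (((hK k hk).1.trans_le (hge k hk)).trans ih))
    have hgrow : ∀ i : ℕ, m K + i ≤ m (K + i) := by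
      intro i
      induction i with
      | zero => simp
      | succ i ih => have := (hK (K + i) (by omega)).2; rw [← add_assoc]; push_cast; omega
    obtain ⟨c, hc⟩ :=
      WithBot.ne_bot_iff_exists.mp ((WithBot.bot_lt_coe (m K)).trans_le (hge K le_rfl)).ne'
    set i := (c - m K + 1).toNat
    have key := (hge _ (Nat.le_add_right K i)).trans (hbound _ (Nat.le_add_right K i))
    rw [← hc, WithBot.coe_le_coe] at key
    have := hgrow i
    omega
  replace hK : ∀ k ≥ k₀, (δ k).degree = m k ∧ m k < m (k + 1) := fun k hk => hK k (hk₀K.trans hk)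
  have hlt : ∀ k ≥ k₀, (u k).degree < m k := by
    refine Nat.le_induction hk₀ fun k hk ih => ?_
    rw [hu, degree_add_eq_right_of_lt (ih.trans_eq (hK k hk).1.symm), (hK k hk).1]
    exact_mod_cast (hK k hk).2
  filter_upwards [eventually_ge_atTop k₀] with k hk
  rw [hu, degree_add_eq_right_of_lt ((hlt k hk).trans_eq (hK k hk).1.symm), (hK k hk).1]

theorem degree_eventually_const_or_eq_of_decreasing (hu : ∀ k, u (k + 1) = u k + δ k)
    (hδ : ∀ᶠ k in atTop, (δ k).degree = m k) (hm : ∀ᶠ k in atTop, m (k + 1) < m k) :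
    (∃ c : ℤ, ∀ᶠ k in atTop, (u k).degree = c) ∨ ∀ᶠ k in atTop, (u k).degree = m k := by
  obtain ⟨K, hK⟩ := (hδ.and hm).exists_forall_of_atTop
  by_cases hex : ∃ k₀ ≥ K, (m k₀ : WithBot ℤ) < (u k₀).degree
  · obtain ⟨k₀, hk₀K, hk₀⟩ := hex
    obtain ⟨c, hc⟩ := WithBot.ne_bot_iff_exists.mp ((WithBot.bot_lt_coe (m k₀)).trans hk₀).ne'
    have hmk : ∀ k ≥ k₀, m k ≤ m k₀ := by
      refine Nat.le_induction le_rfl fun k hk ih => ?_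
      exact ((hK k (hk₀K.trans hk)).2.le).trans ih
    have hconst : ∀ k ≥ k₀, (u k).degree = c := by
      refine Nat.le_induction hc.symm fun k hk ih => ?_
      have hδk : (δ k).degree < (u k).degree := by
        rw [(hK k (hk₀K.trans hk)).1, ih, hc]
        exact lt_of_le_of_lt (by exact_mod_cast hmk k hk) hk₀
      rw [hu, degree_add_eq_left_of_lt hδk, ih]
    exact Or.inl ⟨c, eventually_atTop.2 ⟨k₀, hconst⟩⟩
  · push Not at hex
    refine Or.inr (eventually_atTop.2 ⟨K, fun k hk => ?_⟩)
    have hlt : (u (k + 1)).degree < (-δ k).degree := by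
      rw [degree_neg, (hK k hk).1]
      exact (hex (k + 1) (by omega)).trans_lt (by exact_mod_cast (hK k hk).2)
    rw [show u k = u (k + 1) + -δ k by rw [hu]; abel, degree_add_eq_right_of_lt hlt, degree_neg,
      (hK k hk).1]

end PartialSums

end LaurentPolynomial

theorem degP_eq_of_degree_eq {f : LaurentPolynomial ℤ} {d : ℤ} (h : f.degree = d) :
    degP f = d :=
  congrArg (WithBot.unbotD 0) h

theorem degree_eq_degP {f : LaurentPolynomial ℤ} (hf : f ≠ 0) : f.degree = degP f := by
  obtain ⟨d, hd⟩ := WithBot.ne_bot_iff_exists.mp (mt degree_eq_bot_iff.mp hf)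
  rw [← hd, degP_eq_of_degree_eq hd.symm]

theorem degP_neg (f : LaurentPolynomial ℤ) : degP (-f) = degP f :=
  congrArg (WithBot.unbotD 0) (degree_neg f)

theorem eventually_pos_mul_add_of_pos {α β : ℝ} (hα : 0 < α) :
    ∀ᶠ x : ℝ in atTop, 0 < α * x + β :=
  (tendsto_atTop_add_const_right _ β (tendsto_id.const_mul_atTop hα)).eventually_gt_atTop 0

theorem eventually_quadratic_lt_add {A B C h : ℝ} (hA : 0 < A) (hh : 0 < h) :
    ∀ᶠ x : ℝ in atTop, A * x ^ 2 + B * x + C < A * (x + h) ^ 2 + B * (x + h) + C := by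
  filter_upwards [eventually_pos_mul_add_of_pos (β := A * h ^ 2 + B * h)
    (by positivity : 0 < 2 * A * h)] with x hx
  linear_combination hx

theorem exists_eventually_max_quadratic_eq {A B₁ B₂ : ℝ} (C₁ C₂ : ℝ) (hB : B₁ ≠ B₂) :
    ∃ B C : ℝ, ∀ᶠ x : ℝ in atTop, A * x ^ 2 + B₁ * x + C₁ ≠ A * x ^ 2 + B₂ * x + C₂ ∧
      max (A * x ^ 2 + B₁ * x + C₁) (A * x ^ 2 + B₂ * x + C₂) = A * x ^ 2 + B * x + C := by
  rcases hB.lt_or_gt with hB | hB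
  · refine ⟨B₂, C₂, ?_⟩
    filter_upwards [eventually_pos_mul_add_of_pos (β := C₂ - C₁) (sub_pos.2 hB)] with x hx
    have hlt : A * x ^ 2 + B₁ * x + C₁ < A * x ^ 2 + B₂ * x + C₂ := by linear_combination hx
    exact ⟨hlt.ne, max_eq_right hlt.le⟩
  · refine ⟨B₁, C₁, ?_⟩
    filter_upwards [eventually_pos_mul_add_of_pos (β := C₁ - C₂) (sub_pos.2 hB)] with x hx
    have hlt : A * x ^ 2 + B₂ * x + C₂ < A * x ^ 2 + B₁ * x + C₁ := by linear_combination hx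
    exact ⟨hlt.ne', max_eq_left hlt.le⟩

theorem tendsto_quadratic_div_sq (A B C : ℝ) :
    Tendsto (fun x : ℝ => (A * x ^ 2 + B * x + C) / x ^ 2) atTop (𝓝 A) := by
  have h : Tendsto (fun x : ℝ => A + B * x⁻¹ + C * x⁻¹ ^ 2) atTop
      (𝓝 (A + B * 0 + C * 0 ^ 2)) :=
    (tendsto_const_nhds.add (tendsto_inv_atTop_zero.const_mul B)).add
      ((tendsto_inv_atTop_zero.pow 2).const_mul C)
  simp only [mul_zero, add_zero, ne_eq, OfNat.ofNat_ne_zero, not_false_eq_true, zero_pow] at h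
  refine h.congr' ?_
  filter_upwards [eventually_ne_atTop 0] with x hx
  field_simp

theorem tendsto_div_sq_of_eventually_eq {A B C : ℝ} {l : Filter ℕ} (hl : l ≤ atTop)
    {f : ℕ → ℝ} (hf : ∀ᶠ n in l, f n = A * n ^ 2 + B * n + C) :
    Tendsto (fun n => f n / n ^ 2) l (𝓝 A) := by
  refine ((tendsto_quadratic_div_sq A B C).comp
    (tendsto_natCast_atTop_atTop.mono_left hl)).congr' ?_
  filter_upwards [hf] with n hn
  simp [hn]

theorem tendsto_add_two_mul_add_one (r : ℕ) :
    Tendsto (fun k : ℕ => (r : ℝ) + 2 * k + 1) atTop atTop :=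
  tendsto_atTop_add_const_right _ _ (tendsto_atTop_add_const_left _ _
    (tendsto_natCast_atTop_atTop.const_mul_atTop two_pos))

theorem eventually_lt_succ_of_eventually_eq_quadratic {m : ℕ → ℤ} {A B C : ℝ} (hA : 0 < A)
    (r : ℕ) (hm : ∀ᶠ k : ℕ in atTop,
      (m k : ℝ) = A * ((r : ℝ) + 2 * k + 1) ^ 2 + B * ((r : ℝ) + 2 * k + 1) + C) :
    ∀ᶠ k in atTop, m k < m (k + 1) := by
  filter_upwards [hm, (tendsto_add_atTop_nat 1).eventually hm,
    (tendsto_add_two_mul_add_one r).eventually (eventually_quadratic_lt_add (B := B) (C := C) hA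
      two_pos)] with k h₀ h₁ hlt
  rw [← @Int.cast_lt ℝ, h₀, h₁]
  push_cast
  linear_combination hlt

theorem eventually_mod_two_eq_of_eventually {P : ℕ → Prop} {n₀ : ℕ}
    (h : ∀ᶠ k in atTop, P (n₀ + 2 * k)) : ∀ᶠ n in atTop, n % 2 = n₀ % 2 → P n := by
  obtain ⟨K, hK⟩ := h.exists_forall_of_atTop
  refine eventually_atTop.2 ⟨n₀ + 2 * K, fun n hn hpar => ?_⟩
  have := hK ((n - n₀) / 2) (by omega)
  rwa [show n₀ + 2 * ((n - n₀) / 2) = n by omega] at this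

theorem eventually_mul_add_of_parity {q : ℤ} (hq : 0 < q) (r : ℕ) {ε : ℤ} (hε : Odd ε)
    {P : ℤ → Prop} (hP : ∀ᶠ m in atTop, (Even m ↔ Even (q * (r + 1) + 1)) → P m) :
    ∀ᶠ k : ℕ in atTop, P (q * ((r : ℤ) + 2 * k + 1) + ε) := by
  have ht : Tendsto (fun k : ℕ => q * ((r : ℤ) + 2 * k + 1) + ε) atTop atTop :=
    tendsto_atTop_add_const_right _ _ (tendsto_atTop_mono
      (fun k => show (k : ℤ) ≤ q * (r + 2 * k + 1) by nlinarith) tendsto_natCast_atTop_atTop)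
  filter_upwards [ht.eventually hP] with k hk
  refine hk (Int.even_sub.mp ?_)
  rw [show q * ((r : ℤ) + 2 * k + 1) + ε - (q * (r + 1) + 1) = 2 * (q * k) + (ε - 1) by ring]
  exact (even_two_mul _).add (hε.sub_odd odd_one)

theorem MapClusterPt.eq_or_eq_of_tendsto_inf_principal {ι X : Type*} [TopologicalSpace X]
    [T2Space X] {F : Filter ι} {s : ι → X} {S : Set ι} {x L₁ L₂ : X}
    (h₁ : Tendsto s (F ⊓ 𝓟 S) (𝓝 L₁)) (h₂ : Tendsto s (F ⊓ 𝓟 Sᶜ) (𝓝 L₂))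
    (hx : MapClusterPt x F s) : x = L₁ ∨ x = L₂ := by
  have hF : F = F ⊓ 𝓟 S ⊔ F ⊓ 𝓟 Sᶜ := by
    rw [← inf_sup_left, sup_principal, Set.union_compl_self, principal_univ, inf_top_eq]
  rw [MapClusterPt, hF, map_sup, clusterPt_sup] at hx
  exact hx.imp (fun hx => eq_of_nhds_neBot (hx.mono h₁)) (fun hx => eq_of_nhds_neBot (hx.mono h₂))

section Cabling

variable (J : ℤ → LaurentPolynomial ℤ) (p q : ℤ)

noncomputable def cablingTerm (j : ℤ) : LaurentPolynomial ℤ :=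
  T (-(p * j * (q * j + 2))) * J (q * j + 1)

noncomputable def cablingIndex (n : ℕ) : Finset ℤ :=
  (Finset.Icc (1 - (n : ℤ)) ((n : ℤ) - 1)).filter (fun j => j % 2 = ((n : ℤ) - 1) % 2)

noncomputable def reducedCablingSum (n : ℕ) : LaurentPolynomial ℤ :=
  ∑ j ∈ cablingIndex n, cablingTerm J p q j

noncomputable def cablingPair (j : ℤ) : LaurentPolynomial ℤ :=
  cablingTerm J p q j + cablingTerm J p q (-j)

theorem cablingSum_eq_T_mul (n : ℕ) :
    cablingSum J p q n = T (p * q * ((n : ℤ) ^ 2 - 1)) * reducedCablingSum J p q n := by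
  rw [reducedCablingSum, Finset.mul_sum]
  refine Finset.sum_congr rfl fun j _ => ?_
  rw [cablingTerm, ← mul_assoc, ← T_add, sub_eq_add_neg]

theorem cablingIndex_add_two (n : ℕ) :
    cablingIndex (n + 2) = insert ((n : ℤ) + 1) (insert (-((n : ℤ) + 1)) (cablingIndex n)) := by
  ext j
  simp only [cablingIndex, Finset.mem_filter, Finset.mem_Icc, Finset.mem_insert]
  push_cast
  omega

theorem reducedCablingSum_add_two (n : ℕ) :
    reducedCablingSum J p q (n + 2) =
      reducedCablingSum J p q n + cablingPair J p q ((n : ℤ) + 1) := by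
  rw [reducedCablingSum, reducedCablingSum, cablingIndex_add_two, Finset.sum_insert,
    Finset.sum_insert, cablingPair]
  · abel
  all_goals simp only [cablingIndex, Finset.mem_insert, Finset.mem_filter, Finset.mem_Icc]; omega

theorem degP_cablingSum_of_degree_eq {n : ℕ} {c : ℤ}
    (h : (reducedCablingSum J p q n).degree = c) :
    degP (cablingSum J p q n) = p * q * ((n : ℤ) ^ 2 - 1) + c := by
  rw [cablingSum_eq_T_mul, degP_eq_of_degree_eq (by rw [degree_T_mul, h, WithBot.coe_add])]

theorem degree_cablingTerm {j : ℤ} (hJ : J (q * j + 1) ≠ 0) :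
    (cablingTerm J p q j).degree = ↑(-(p * j * (q * j + 2)) + degP (J (q * j + 1))) := by
  rw [cablingTerm, degree_T_mul, degree_eq_degP hJ, WithBot.coe_add]

theorem exists_eventually_degP_cablingPair (hq : 0 < q) (hJodd : ∀ m, J (-m) = -J m)
    {a b d : ℝ} (hslope : (p : ℝ) ≠ 4 * a * q) (r : ℕ)
    (hJ : ∀ᶠ m : ℤ in atTop, (Even m ↔ Even (q * (r + 1) + 1)) →
      J m ≠ 0 ∧ (degP (J m) : ℝ) = 4 * (a * m ^ 2 + b * m + d)) :
    ∃ B C : ℝ, ∀ᶠ k : ℕ in atTop, cablingPair J p q (r + 2 * k + 1) ≠ 0 ∧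
      (degP (cablingPair J p q (r + 2 * k + 1)) : ℝ) =
        (4 * a * q ^ 2 - p * q) * ((r : ℝ) + 2 * k + 1) ^ 2 + B * ((r : ℝ) + 2 * k + 1) + C := by
  have hB : (8 * a * q - 2 * p + 4 * b * q : ℝ) ≠ 2 * p - 8 * a * q + 4 * b * q := by
    intro h; apply hslope; linarith
  obtain ⟨B, C, hmax⟩ := exists_eventually_max_quadratic_eq (A := 4 * a * q ^ 2 - p * q)
    (4 * a + 4 * b + 4 * d) (4 * a - 4 * b + 4 * d) hB
  refine ⟨B, C, ?_⟩
  filter_upwards [eventually_mul_add_of_parity hq r odd_one hJ,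
    eventually_mul_add_of_parity hq r odd_one.neg hJ,
    (tendsto_add_two_mul_add_one r).eventually hmax]
    with k ⟨hJ₁, hdeg₁⟩ ⟨hJ₂, hdeg₂⟩ ⟨hne, hmaxk⟩
  set j : ℤ := r + 2 * k + 1 with hj
  have hneg : J (q * -j + 1) = -J (q * j + -1) := by rw [← hJodd]; ring_nf
  have hJ₂' : J (q * -j + 1) ≠ 0 := by rw [hneg]; exact neg_ne_zero.2 hJ₂
  have e₁ : ((-(p * j * (q * j + 2)) + degP (J (q * j + 1)) : ℤ) : ℝ) =
      (4 * a * q ^ 2 - p * q) * ((r : ℝ) + 2 * k + 1) ^ 2 +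
        (8 * a * q - 2 * p + 4 * b * q) * ((r : ℝ) + 2 * k + 1) + (4 * a + 4 * b + 4 * d) := by
    rw [Int.cast_add, hdeg₁]; push_cast [hj]; ring
  have e₂ : ((-(p * -j * (q * -j + 2)) + degP (J (q * -j + 1)) : ℤ) : ℝ) =
      (4 * a * q ^ 2 - p * q) * ((r : ℝ) + 2 * k + 1) ^ 2 +
        (2 * p - 8 * a * q + 4 * b * q) * ((r : ℝ) + 2 * k + 1) + (4 * a - 4 * b + 4 * d) := by
    rw [hneg, degP_neg, Int.cast_add, hdeg₂]; push_cast [hj]; ring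
  have hdeg : (cablingPair J p q j).degree =
      ↑(max (-(p * j * (q * j + 2)) + degP (J (q * j + 1)))
        (-(p * -j * (q * -j + 2)) + degP (J (q * -j + 1)))) := by
    have hne' : (cablingTerm J p q j).degree ≠ (cablingTerm J p q (-j)).degree := by
      rw [degree_cablingTerm J p q hJ₁, degree_cablingTerm J p q hJ₂', Ne, WithBot.coe_inj]
      intro h; apply hne; rw [← e₁, ← e₂, h]
    rw [cablingPair, degree_add_eq_max_of_ne hne', degree_cablingTerm J p q hJ₁,
      degree_cablingTerm J p q hJ₂', WithBot.coe_max]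
  refine ⟨fun h => WithBot.bot_ne_coe (h ▸ hdeg :), ?_⟩
  rw [degP_eq_of_degree_eq hdeg, Int.cast_max, e₁, e₂, hmaxk]

theorem exists_eventually_degP_cablingSum_eq_quadratic (hq : 0 < q)
    (hJodd : ∀ m, J (-m) = -J m) {a b d : ℝ} (hslope : (p : ℝ) ≠ 4 * a * q) (r : ℕ)
    (hJ : ∀ᶠ m : ℤ in atTop, (Even m ↔ Even (q * (r + 1) + 1)) →
      J m ≠ 0 ∧ (degP (J m) : ℝ) = 4 * (a * m ^ 2 + b * m + d)) :
    ∃ c₂ ∈ ({4 * a * q ^ 2, (p : ℝ) * q} : Set ℝ), ∃ c₁ c₀ : ℝ, ∀ᶠ n : ℕ in atTop,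
      n % 2 = r % 2 → (degP (cablingSum J p q n) : ℝ) = c₂ * n ^ 2 + c₁ * n + c₀ := by
  obtain ⟨B, C, hpair⟩ := exists_eventually_degP_cablingPair J p q hq hJodd hslope r hJ
  set A : ℝ := 4 * a * q ^ 2 - p * q with hA
  set m : ℕ → ℤ := fun k => degP (cablingPair J p q (r + 2 * k + 1))
  have hu : ∀ k : ℕ, reducedCablingSum J p q (r + 2 * (k + 1)) =
      reducedCablingSum J p q (r + 2 * k) + cablingPair J p q (r + 2 * k + 1) := fun k => by
    rw [show r + 2 * (k + 1) = r + 2 * k + 2 by ring, reducedCablingSum_add_two]; push_cast; rfl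
  have hδ : ∀ᶠ k : ℕ in atTop, (cablingPair J p q (r + 2 * k + 1)).degree = m k :=
    hpair.mono fun k hk => degree_eq_degP hk.1
  have hm : ∀ᶠ k : ℕ in atTop,
      (m k : ℝ) = A * ((r : ℝ) + 2 * k + 1) ^ 2 + B * ((r : ℝ) + 2 * k + 1) + C :=
    hpair.mono fun k hk => hk.2
  have hA0 : A ≠ 0 := by
    rw [hA, show 4 * a * q ^ 2 - p * q = (q : ℝ) * (4 * a * q - p) by ring]
    exact mul_ne_zero (by exact_mod_cast hq.ne') (sub_ne_zero.2 hslope.symm)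
  rcases hA0.lt_or_gt with hneg | hpos
  · have hdec : ∀ᶠ k in atTop, m (k + 1) < m k :=
      (eventually_lt_succ_of_eventually_eq_quadratic (m := fun k => -m k) (B := -B) (C := -C)
        (neg_pos.2 hneg) r
        (hm.mono fun k hk => by simp only [Int.cast_neg, hk]; ring)).mono
        fun k hk => neg_lt_neg_iff.1 hk
    rcases degree_eventually_const_or_eq_of_decreasing
        (u := fun k => reducedCablingSum J p q (r + 2 * k)) hu hδ hdec with ⟨c, hc⟩ | hfollow
    · refine ⟨p * q, by simp, 0, c - p * q, eventually_mod_two_eq_of_eventually ?_⟩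
      filter_upwards [hc] with k hk
      rw [degP_cablingSum_of_degree_eq J p q hk]; push_cast; ring
    · refine ⟨4 * a * q ^ 2, by simp, 2 * A + B, A + B + C - p * q,
        eventually_mod_two_eq_of_eventually ?_⟩
      filter_upwards [hfollow, hm] with k hk hmk
      rw [degP_cablingSum_of_degree_eq J p q hk]; push_cast; rw [hmk]; ring
  · have hdeg := eventually_degree_succ_eq_of_increasing
      (u := fun k => reducedCablingSum J p q (r + 2 * k)) hu hδ
      (eventually_lt_succ_of_eventually_eq_quadratic hpos r hm)
    have key : ∀ᶠ n : ℕ in atTop, n % 2 = (r + 2) % 2 → (degP (cablingSum J p q n) : ℝ) =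
        4 * a * q ^ 2 * n ^ 2 + (B - 2 * A) * n + (A - B + C - p * q) := by
      refine eventually_mod_two_eq_of_eventually ?_
      filter_upwards [hdeg, hm] with k hk hmk
      rw [show r + 2 + 2 * k = r + 2 * (k + 1) by ring, degP_cablingSum_of_degree_eq J p q hk]
      push_cast; rw [hmk]; ring
    exact ⟨4 * a * q ^ 2, by simp, B - 2 * A, A - B + C - p * q,
      by simpa only [Nat.add_mod_right] using key⟩

theorem exists_tendsto_degP_cablingSum_div_of_parity (hq : 0 < q)
    (hJodd : ∀ m, J (-m) = -J m) (hJne : ∀ m : ℤ, 1 ≤ m → J m ≠ 0)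
    {a₀ a₁ b₀ b₁ d₀ d₁ : ℚ} {N : ℤ}
    (hdeg : ∀ n : ℤ, N ≤ n → (degP (J n) : ℚ) = 4 * ((if Even n then a₀ else a₁) * (n : ℚ) ^ 2 +
      (if Even n then b₀ else b₁) * (n : ℚ) + (if Even n then d₀ else d₁)))
    (hslope₀ : (p : ℚ) / q ≠ 4 * a₀) (hslope₁ : (p : ℚ) / q ≠ 4 * a₁) (r : ℕ) :
    ∃ L ∈ ({(q : ℝ) ^ 2 * a₀, (q : ℝ) ^ 2 * a₁, (p : ℝ) * q / 4} : Set ℝ),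
      Tendsto (fun n : ℕ => (degP (cablingSum J p q n) : ℝ) / (4 * (n : ℝ) ^ 2))
        (atTop ⊓ 𝓟 {n | n % 2 = r % 2}) (𝓝 L) := by
  have hslope : ∀ a : ℚ, (p : ℚ) / q ≠ 4 * a → (p : ℝ) ≠ 4 * a * q := fun a ha h => by
    apply ha
    rw [div_eq_iff (by exact_mod_cast hq.ne')]
    exact_mod_cast h
  -- For `j ≡ r + 1 (mod 2)` the parity of `q * j ± 1` is that of `q * (r + 1) + 1`.
  obtain ⟨c₂, hc₂, c₁, c₀, h⟩ := exists_eventually_degP_cablingSum_eq_quadratic J p q hq hJodd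
    (a := if Even (q * (r + 1) + 1) then (a₀ : ℝ) else a₁)
    (b := if Even (q * (r + 1) + 1) then (b₀ : ℝ) else b₁)
    (d := if Even (q * (r + 1) + 1) then (d₀ : ℝ) else d₁)
    (by split_ifs; exacts [hslope a₀ hslope₀, hslope a₁ hslope₁]) r (by
      filter_upwards [eventually_ge_atTop N, eventually_ge_atTop 1] with m hmN hm1 hpar
      refine ⟨hJne m hm1, ?_⟩
      have := hdeg m hmN
      simp only [hpar] at this
      split_ifs at this ⊢ <;> exact_mod_cast this)
  refine ⟨c₂ / 4, ?_, ((tendsto_div_sq_of_eventually_eq inf_le_left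
    (eventually_inf_principal.2 h)).div_const 4).congr fun n => by rw [div_div, mul_comm]⟩
  rcases hc₂ with rfl | rfl
  · split_ifs
    exacts [Or.inl (by ring), Or.inr (Or.inl (by ring))]
  · exact Or.inr (Or.inr rfl)

end Cabling

theorem statement7_general (p q : ℤ) (hq : 2 ≤ q)
    (J : ℤ → LaurentPolynomial ℤ)
    (hJodd : ∀ m : ℤ, J (-m) = -J m)
    (hJne : ∀ m : ℤ, 1 ≤ m → J m ≠ 0)
    (a₀ a₁ b₀ b₁ d₀ d₁ : ℚ) (N : ℤ)
    (hdeg : ∀ n : ℤ, N ≤ n →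
      (degP (J n) : ℚ) =
        4 * ((if Even n then a₀ else a₁) * (n : ℚ) ^ 2 +
             (if Even n then b₀ else b₁) * (n : ℚ) +
             (if Even n then d₀ else d₁)))
    (hslope₀ : (p : ℚ) / (q : ℚ) ≠ 4 * a₀)
    (hslope₁ : (p : ℚ) / (q : ℚ) ≠ 4 * a₁) :
    ∀ x : ℝ,
      MapClusterPt x Filter.atTop
        (fun n : ℕ => (degP (cablingSum J p q n) : ℝ) / (4 * (n : ℝ) ^ 2)) →
      x ∈ ({(q : ℝ) ^ 2 * (a₀ : ℝ), (q : ℝ) ^ 2 * (a₁ : ℝ),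
            (p : ℝ) * (q : ℝ) / 4} : Set ℝ) := by
  intro x hx
  have hclass := exists_tendsto_degP_cablingSum_div_of_parity J p q (by omega) hJodd hJne hdeg
    hslope₀ hslope₁
  obtain ⟨L₀, hL₀, h₀⟩ := hclass 0
  obtain ⟨L₁, hL₁, h₁⟩ := hclass 1
  have hodd : {n : ℕ | n % 2 = 0 % 2}ᶜ = {n | n % 2 = 1 % 2} := by ext n; simp
  rcases hx.eq_or_eq_of_tendsto_inf_principal h₀ (hodd ▸ h₁) with rfl | rfl
  exacts [hL₀, hL₁]

/-- The Jones-slope containment `js_{K_{p,q}} ⊆ q²·js_K ∪ {pq/4}` of Theorem 1.3 of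
Kalfagianni–Tran, expressed at the level of degree sequences: every cluster point of
`deg₊ JC(n) / (4n²)` lies in `{q²a₀, q²a₁, pq/4}`. -/
theorem statement7 (p q : ℤ) (hq : 2 ≤ q) (hcop : Int.gcd p q = 1)
    (J : ℤ → LaurentPolynomial ℤ)
    (hJodd : ∀ m : ℤ, J (-m) = -J m)
    (hJne : ∀ m : ℤ, 1 ≤ m → J m ≠ 0)
    (a₀ a₁ b₀ b₁ d₀ d₁ : ℚ) (hb₀ : b₀ ≤ 0) (hb₁ : b₁ ≤ 0) (N : ℤ)
    (hdeg : ∀ n : ℤ, N ≤ n →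
      (degP (J n) : ℚ) =
        4 * ((if Even n then a₀ else a₁) * (n : ℚ) ^ 2 +
             (if Even n then b₀ else b₁) * (n : ℚ) +
             (if Even n then d₀ else d₁)))
    (hslope₀ : (p : ℚ) / (q : ℚ) ≠ 4 * a₀)
    (hslope₁ : (p : ℚ) / (q : ℚ) ≠ 4 * a₁) :
    ∀ x : ℝ,
      MapClusterPt x Filter.atTop
        (fun n : ℕ => (degP (cablingSum J p q n) : ℝ) / (4 * (n : ℝ) ^ 2)) →
      x ∈ ({(q : ℝ) ^ 2 * (a₀ : ℝ), (q : ℝ) ^ 2 * (a₁ : ℝ),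
            (p : ℝ) * (q : ℝ) / 4} : Set ℝ) :=
  statement7_general p q hq J hJodd hJne a₀ a₁ b₀ b₁ d₀ d₁ N hdeg hslope₀ hslope₁
end

section
/- Let m₂ ≤ −2 and m₁ be integers with 2m₁ ≤ −3m₂. Then for every integer n ≥ 0, Q(n, n, n) = (2 + m₁ + 3m₂)n; consequently, for every n ≥ 1, Q(n−1, n−1, n−1) + (n−1)/2 = (5/2 + m₁ + 3m₂)(n−1), and 5/2 + m₁ + 3m₂ < 0. (Case C-1 of Theorem 6.2 on 2-fusion knots.) -/
/-- The Garoufalidis–van der Veen degree function `Q(n, k₁, k₂)` for the 2-fusion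
knot `K(m₁, m₂)`. -/
def Q (m₁ m₂ : ℤ) (n k₁ k₂ : ℚ) : ℚ :=
  let μ : ℚ := min (2 * k₁ + n) (min (2 * k₁ + k₂ + n) (k₂ + 2 * n))
  k₁ / 2 - 3 * k₁ ^ 2 / 2 - 3 * k₁ * k₂ - k₂ ^ 2 - (m₁ : ℚ) * k₁ - (m₁ : ℚ) * k₁ ^ 2
    - (m₂ : ℚ) * k₂ - (m₂ : ℚ) * k₂ ^ 2 - 6 * k₁ * n - 3 * k₂ * n
    + 2 * (m₁ : ℚ) * n + 4 * (m₂ : ℚ) * n - (m₂ : ℚ) * k₂ * n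
    - 2 * n ^ 2 + (m₁ : ℚ) * n ^ 2 + 2 * (m₂ : ℚ) * n ^ 2
    + ((1 + 8 * k₁ + 4 * k₂ + 8 * n) * μ - 3 * μ ^ 2) / 2

lemma Q_diag (m₁ m₂ : ℤ) (x : ℚ) (hx : 0 ≤ x) :
    Q m₁ m₂ x x x = (2 + (m₁ : ℚ) + 3 * (m₂ : ℚ)) * x := by
  have h1 : min (2 * x + x) (min (2 * x + x + x) (x + 2 * x)) = 3 * x := by
    rw [min_eq_right (show x + 2 * x ≤ 2 * x + x + x by linarith),
      min_eq_left (le_of_eq (by ring))]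
    ring
  simp only [Q, h1]
  ring

/-- Case C-1 of Theorem 6.2 of Kalfagianni–Tran on 2-fusion knots. -/
theorem statement11 (m₁ m₂ : ℤ) (hm₂ : m₂ ≤ -2) (hm₁ : 2 * m₁ ≤ -(3 * m₂)) :
    (∀ n : ℕ, Q m₁ m₂ (n : ℚ) (n : ℚ) (n : ℚ) =
      (2 + (m₁ : ℚ) + 3 * (m₂ : ℚ)) * (n : ℚ)) ∧
    (∀ n : ℕ, 1 ≤ n →
      Q m₁ m₂ ((n : ℚ) - 1) ((n : ℚ) - 1) ((n : ℚ) - 1) + ((n : ℚ) - 1) / 2 =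
        (5 / 2 + (m₁ : ℚ) + 3 * (m₂ : ℚ)) * ((n : ℚ) - 1)) ∧
    5 / 2 + (m₁ : ℚ) + 3 * (m₂ : ℚ) < 0 := by
  have hm₁' : (2 : ℚ) * m₁ ≤ -(3 * m₂) := by exact_mod_cast hm₁
  have hm₂' : (m₂ : ℚ) ≤ -2 := by exact_mod_cast hm₂
  refine ⟨fun n => Q_diag m₁ m₂ n (by positivity), fun n hn => ?_, by linarith⟩
  have hx : (0 : ℚ) ≤ (n : ℚ) - 1 := by
    have : (1 : ℚ) ≤ n := by exact_mod_cast hn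
    linarith
  rw [Q_diag m₁ m₂ _ hx]
  ring
end
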